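/- Let k be a field and Λ a finite-dimensional k-algebra. Suppose that for every X in D^b(Λ-mod) and every perfect complex P there is a k-linear duality Hom_{D(Λ-Mod)}(P, X) ≅ Hom_{D(Λ-Mod)}(X, P)^∨, natural in both P and X. Then Λ is a symmetric algebra. -/

import Mathlib

open CategoryTheory Limits

section

variable {k Λ : Type} [Field k] [Ring Λ] [Algebra k Λ]

/-- Scalar multiplication by the central element `algebraMap k Λ r` on a left `Λ`-module,
as a `Λ`-linear endomorphism. -/
def centralSMul (r : k) (N : ModuleCat.{0} Λ) : N ⟶ N := ModuleCat.ofHom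
  { toFun x := algebraMap k Λ r • x
    map_add' x y := smul_add _ x y
    map_smul' a x := by
      simp only [RingHom.id_apply, ← mul_smul, Algebra.commutes r a] }

@[simp] lemma centralSMul_apply (r : k) (N : ModuleCat.{0} Λ) (x : N) :
    centralSMul r N x = algebraMap k Λ r • x := rfl

/-- Multiplication by `algebraMap k Λ r` as an endomorphism of a cochain complex of
`Λ`-modules. -/
def smulEndo (r : k) (K : CochainComplex (ModuleCat.{0} Λ) ℤ) : K ⟶ K where
  f i := centralSMul r (K.X i)
  comm' i j _ := by
    ext x
    show K.d i j (centralSMul r (K.X i) x) = centralSMul r (K.X j) (K.d i j x)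
    simp [map_smul]


lemma smulEndo_one (K : CochainComplex (ModuleCat.{0} Λ) ℤ) :
    smulEndo (1 : k) K = 𝟙 K := by
  ext i x
  show centralSMul (1 : k) (K.X i) x = x
  simp

lemma smulEndo_mul (r s : k) (K : CochainComplex (ModuleCat.{0} Λ) ℤ) :
    smulEndo (r * s) K = smulEndo r K ≫ smulEndo s K := by
  ext i x
  show centralSMul (r * s) (K.X i) x = centralSMul s (K.X i) (centralSMul r (K.X i) x)
  simp [← mul_smul, ← map_mul, mul_comm r s]

lemma smulEndo_add (r s : k) (K : CochainComplex (ModuleCat.{0} Λ) ℤ) :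
    smulEndo (r + s) K = smulEndo r K + smulEndo s K := by
  ext i x
  show centralSMul (r + s) (K.X i) x = centralSMul r (K.X i) x + centralSMul s (K.X i) x
  simp [add_smul]

lemma smulEndo_zero (K : CochainComplex (ModuleCat.{0} Λ) ℤ) :
    smulEndo (0 : k) K = 0 := by
  ext i x
  show centralSMul (0 : k) (K.X i) x = 0
  simp

variable [HasDerivedCategory.{0} (ModuleCat.{0} Λ)]

/-- The `k`-vector space structure on morphisms in the derived category of a `k`-algebra,
out of the image of a complex. -/
noncomputable instance qHomModule (K : CochainComplex (ModuleCat.{0} Λ) ℤ)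
    (Y : DerivedCategory (ModuleCat.{0} Λ)) :
    Module k (DerivedCategory.Q.obj K ⟶ Y) where
  smul r f := DerivedCategory.Q.map (smulEndo r K) ≫ f
  one_smul f := by
    show DerivedCategory.Q.map (smulEndo (1 : k) K) ≫ f = f
    rw [smulEndo_one, CategoryTheory.Functor.map_id, Category.id_comp]
  mul_smul r s f := by
    show DerivedCategory.Q.map (smulEndo (r * s) K) ≫ f =
      DerivedCategory.Q.map (smulEndo r K) ≫ DerivedCategory.Q.map (smulEndo s K) ≫ f
    rw [smulEndo_mul, CategoryTheory.Functor.map_comp, Category.assoc]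
  smul_zero r := comp_zero
  smul_add r f g := Preadditive.comp_add _ _ _ _ _ _
  add_smul r s f := by
    show DerivedCategory.Q.map (smulEndo (r + s) K) ≫ f = _
    rw [smulEndo_add, Functor.map_add, Preadditive.add_comp]
    rfl
  zero_smul f := by
    show DerivedCategory.Q.map (smulEndo (0 : k) K) ≫ f = 0
    rw [smulEndo_zero, Functor.map_zero, Limits.zero_comp]

end

/-- A finite-dimensional `k`-algebra is *symmetric* if it admits a nondegenerate
symmetric associative bilinear form `Λ × Λ → k`; equivalently, `Λ ≅ Λ^∨` as
`(Λ,Λ)`-bimodules. -/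
def IsSymmetricAlgebra' (k Λ : Type*) [Field k] [Ring Λ] [Algebra k Λ] : Prop :=
  ∃ B : Λ →ₗ[k] Λ →ₗ[k] k,
    (∀ a b : Λ, B a b = B b a) ∧
    (∀ a b c : Λ, B (a * b) c = B a (b * c)) ∧
    (∀ a : Λ, (∀ b : Λ, B a b = 0) → a = 0)

variable (k Λ : Type) [Field k] [Ring Λ] [Algebra k Λ]

/-- A perfect complex: bounded with finitely generated projective terms. -/
def IsPerfectComplex (P : CochainComplex (ModuleCat.{0} Λ) ℤ) : Prop :=
  {i : ℤ | ¬ Limits.IsZero (P.X i)}.Finite ∧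
    ∀ i : ℤ, Module.Finite Λ (P.X i) ∧ Module.Projective Λ (P.X i)

/-- An object of `D^b(Λ-mod)`: a bounded complex of finite-dimensional modules. -/
def IsDbComplex (X : CochainComplex (ModuleCat.{0} Λ) ℤ) : Prop :=
  {i : ℤ | ¬ Limits.IsZero (X.X i)}.Finite ∧
    ∀ i : ℤ, @FiniteDimensional k (RestrictScalars k Λ (X.X i)) _ _
      (RestrictScalars.module k Λ (X.X i))

variable [HasDerivedCategory.{0} (ModuleCat.{0} Λ)]

open DerivedCategory in
/-- A natural `k`-linear duality `Hom_{D(Λ)}(P, X) ≅ Hom_{D(Λ)}(X, P)^∨` for perfect `P` and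
`X` in `D^b(Λ-mod)`: a family of `k`-linear isomorphisms compatible with composition in both
variables. -/
def NaturalSerreDuality : Prop :=
  ∃ e : ∀ P X : CochainComplex (ModuleCat.{0} Λ) ℤ, IsPerfectComplex Λ P → IsDbComplex k Λ X →
      ((Q.obj P ⟶ Q.obj X) ≃ₗ[k] Module.Dual k (Q.obj X ⟶ Q.obj P)),
    (∀ (P P' X : CochainComplex (ModuleCat.{0} Λ) ℤ) (hP : IsPerfectComplex Λ P)
        (hP' : IsPerfectComplex Λ P') (hX : IsDbComplex k Λ X)
        (u : Q.obj P' ⟶ Q.obj P) (φ : Q.obj P ⟶ Q.obj X) (ψ : Q.obj X ⟶ Q.obj P'),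
        e P' X hP' hX (u ≫ φ) ψ = e P X hP hX φ (ψ ≫ u)) ∧
    (∀ (P X X' : CochainComplex (ModuleCat.{0} Λ) ℤ) (hP : IsPerfectComplex Λ P)
        (hX : IsDbComplex k Λ X) (hX' : IsDbComplex k Λ X')
        (v : Q.obj X ⟶ Q.obj X') (φ : Q.obj P ⟶ Q.obj X) (ψ : Q.obj X' ⟶ Q.obj P),
        e P X' hP hX' (φ ≫ v) ψ = e P X hP hX φ (v ≫ ψ))

/-!
Take `P = X = Λ` concentrated in degree `0`. Naturality of the duality `e` in both variables gives
`e u ψ = T (ψ ≫ u) = T (u ≫ ψ)` with `T := e (𝟙 _)`, so `T` is a nondegenerate symmetric trace on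
`End_D(Λ)`. Since `Λ-Mod` embeds fully faithfully into its derived category, right multiplication
identifies `Λᵐᵒᵖ` with `End_D(Λ)`, and `(a, b) ↦ T (a * b)` is the required symmetric form on `Λ`.
-/

open HomologicalComplex DerivedCategory

lemma isSymmetricAlgebra'_of_trace {k Λ : Type*} [Field k] [Ring Λ] [Algebra k Λ]
    (τ : Λ →ₗ[k] k) (hτ : ∀ a b, τ (a * b) = τ (b * a))
    (hτ_nondeg : ∀ a, (∀ b, τ (a * b) = 0) → a = 0) : IsSymmetricAlgebra' k Λ :=
  ⟨(LinearMap.mul k Λ).compr₂ τ, hτ, fun a b c => by simp [mul_assoc], hτ_nondeg⟩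

section

variable {k Λ : Type} [Field k] [Ring Λ] [Algebra k Λ]

lemma isPerfectComplex_single (M : ModuleCat.{0} Λ) [Module.Finite Λ M] [Module.Projective Λ M]
    (n : ℤ) : IsPerfectComplex Λ ((single _ (ComplexShape.up ℤ) n).obj M) := by
  refine ⟨(Set.finite_singleton n).subset fun i hi => ?_, fun i => ?_⟩
  · by_contra h
    exact hi (isZero_single_obj_X _ n M i h)
  · by_cases h : i = n
    · subst h
      let e := (singleObjXSelf (ComplexShape.up ℤ) i M).toLinearEquiv.symm
      exact ⟨Module.Finite.equiv e, Module.Projective.of_equiv e⟩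
    · have := ModuleCat.isZero_iff_subsingleton.mp
        (isZero_single_obj_X (ComplexShape.up ℤ) n M i h)
      exact ⟨inferInstance, inferInstance⟩

lemma IsPerfectComplex.isDbComplex [FiniteDimensional k Λ]
    {P : CochainComplex (ModuleCat.{0} Λ) ℤ} (hP : IsPerfectComplex Λ P) : IsDbComplex k Λ P := by
  refine ⟨hP.1, fun i => ?_⟩
  let := RestrictScalars.module k Λ (P.X i)
  let := RestrictScalars.moduleOrig k Λ (P.X i)
  have := RestrictScalars.isScalarTower k Λ (P.X i)
  have : Module.Finite Λ (RestrictScalars k Λ (P.X i)) := (hP.2 i).1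
  exact Module.Finite.trans Λ (RestrictScalars k Λ (P.X i))

lemma smulEndo_single (r : k) (M : ModuleCat.{0} Λ) (n : ℤ) :
    smulEndo r ((single _ (ComplexShape.up ℤ) n).obj M) =
      (single _ (ComplexShape.up ℤ) n).map (centralSMul r M) := by
  ext x
  simp [smulEndo, single_map_f_self]

end

section

variable {k Λ : Type} [Field k] [Ring Λ] [Algebra k Λ]

def rightMul (a : Λ) : ModuleCat.of Λ Λ ⟶ ModuleCat.of Λ Λ :=
  ModuleCat.ofHom (LinearMap.toSpanSingleton Λ Λ a)

lemma rightMul_mul (a b : Λ) : rightMul (a * b) = rightMul a ≫ rightMul b := by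
  ext
  simp [rightMul]

lemma rightMul_add (a b : Λ) : rightMul (a + b) = rightMul a + rightMul b := by
  ext
  simp [rightMul, mul_add]

lemma centralSMul_comp_rightMul (r : k) (a : Λ) :
    centralSMul r (ModuleCat.of Λ Λ) ≫ rightMul a = rightMul (r • a) := by
  ext
  simp [rightMul, centralSMul, Algebra.smul_def]

lemma rightMul_bijective : Function.Bijective (rightMul (Λ := Λ)) :=
  ((LinearMap.ringLmapEquivSelf Λ ℕ Λ).symm.toEquiv.trans
    (ModuleCat.homEquiv (M := ModuleCat.of Λ Λ) (N := ModuleCat.of Λ Λ)).symm).bijective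

variable (Λ) in
noncomputable abbrev regularComplex : CochainComplex (ModuleCat.{0} Λ) ℤ :=
  (single _ (ComplexShape.up ℤ) 0).obj (ModuleCat.of Λ Λ)

variable [HasDerivedCategory.{0} (ModuleCat.{0} Λ)]

variable (k Λ) in
noncomputable def derivedRightMul :
    Λ →ₗ[k] (Q.obj (regularComplex Λ) ⟶ Q.obj (regularComplex Λ)) where
  toFun a := Q.map ((single _ _ 0).map (rightMul a))
  map_add' a b := by simp only [rightMul_add, Functor.map_add]
  map_smul' r a := by
    change _ = Q.map (smulEndo r _) ≫ _
    rw [smulEndo_single, ← Functor.map_comp, ← Functor.map_comp, centralSMul_comp_rightMul]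

lemma derivedRightMul_mul (a b : Λ) :
    derivedRightMul k Λ (a * b) = derivedRightMul k Λ a ≫ derivedRightMul k Λ b := by
  simp only [derivedRightMul, LinearMap.coe_mk, AddHom.coe_mk, rightMul_mul, Functor.map_comp]

-- `singleFunctor _ 0` is definitionally `single _ _ 0 ⋙ Q`, and it is fully faithful.
lemma derivedRightMul_bijective : Function.Bijective (derivedRightMul k Λ) :=
  ((Functor.FullyFaithful.ofFullyFaithful (singleFunctor (ModuleCat.{0} Λ) 0)).map_bijective
    _ _).comp rightMul_bijective

end

lemma NaturalSerreDuality.exists_nondegenerate_trace {k Λ : Type} [Field k] [Ring Λ]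
    [Algebra k Λ] [HasDerivedCategory.{0} (ModuleCat.{0} Λ)] (h : NaturalSerreDuality k Λ)
    {P : CochainComplex (ModuleCat.{0} Λ) ℤ} (hP : IsPerfectComplex Λ P)
    (hPb : IsDbComplex k Λ P) :
    ∃ T : Module.Dual k (Q.obj P ⟶ Q.obj P),
      (∀ u ψ : Q.obj P ⟶ Q.obj P, T (u ≫ ψ) = T (ψ ≫ u)) ∧
      ∀ u : Q.obj P ⟶ Q.obj P, (∀ ψ, T (ψ ≫ u) = 0) → u = 0 := by
  obtain ⟨e, natural_perfect, natural_db⟩ := h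
  let E := e P P hP hPb
  have eval_left (u ψ) : E u ψ = E (𝟙 _) (ψ ≫ u) := by
    simpa using natural_perfect P P P hP hP hPb u (𝟙 _) ψ
  have eval_right (u ψ) : E u ψ = E (𝟙 _) (u ≫ ψ) := by
    simpa using natural_db P P P hP hPb hPb u (𝟙 _) ψ
  refine ⟨E (𝟙 _), fun u ψ => (eval_right u ψ).symm.trans (eval_left u ψ), fun u hu => ?_⟩
  refine E.injective (LinearMap.ext fun ψ => ?_)
  rw [map_zero, eval_left]
  exact hu ψ

/-- if a finite-dimensional `k`-algebra `Λ` admits a natural `k`-linear duality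
`Hom_{D(Λ-Mod)}(P, X) ≅ Hom_{D(Λ-Mod)}(X, P)^∨` for every perfect complex `P` and every `X` in
`D^b(Λ-mod)`, natural in both variables, then `Λ` is a symmetric algebra. -/
theorem stmt19 (k Λ : Type) [Field k] [Ring Λ] [Algebra k Λ] [FiniteDimensional k Λ]
    [HasDerivedCategory.{0} (ModuleCat.{0} Λ)]
    (hdual : NaturalSerreDuality k Λ) :
    IsSymmetricAlgebra' k Λ := by
  have hperfect := isPerfectComplex_single (ModuleCat.of Λ Λ) 0
  obtain ⟨T, hT_comm, hT_nondeg⟩ :=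
    hdual.exists_nondegenerate_trace hperfect (hperfect.isDbComplex (k := k))
  let σ := derivedRightMul k Λ
  have hσ_mul (a b : Λ) : σ (a * b) = σ a ≫ σ b := derivedRightMul_mul a b
  have hσ_bij : Function.Bijective σ := derivedRightMul_bijective
  refine isSymmetricAlgebra'_of_trace (T ∘ₗ σ) (fun a b => ?_) (fun a ha => ?_)
  · simp only [LinearMap.comp_apply, hσ_mul, hT_comm]
  · refine hσ_bij.injective ((hT_nondeg (σ a) fun ψ => ?_).trans σ.map_zero.symm)
    obtain ⟨b, rfl⟩ := hσ_bij.surjective ψ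
    rw [← hT_comm, ← hσ_mul]
    exact ha b
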